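/- For every J ∈ L_ℝ(ℚ_p^N), the function W ↦ e^{⟨W,J⟩} on L_ℝ'(ℚ_p^N) is P-integrable and ∫_{L_ℝ'(ℚ_p^N)} e^{⟨W,J⟩} dP(W) = exp( (1/2) B(J,J) ) = exp( (1/2) ∫_{ℚ_p^N} |Ĵ(κ)|² / ((γ/2)A_{w_δ}(‖κ‖_p) + α_2/2) d^N κ ). Consequently, for every measurable F : L_ℝ'(ℚ_p^N) → ℝ with 0 ≤ F ≤ 1, the function W ↦ F(W) e^{⟨W,J⟩} is P-integrable with ∫ F(W) e^{⟨W,J⟩} dP(W) ≤ e^{B(J,J)/2} < ∞ (so the interacting partition functions with source J are finite, and the free generating functional is the Gaussian exponential of the source). -/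

import Mathlib

open MeasureTheory Filter

noncomputable instance (p : ℕ) [Fact p.Prime] : MeasurableSpace ℚ_[p] := borel _
instance (p : ℕ) [Fact p.Prime] : BorelSpace ℚ_[p] := ⟨rfl⟩

/-- Real-valued Bruhat–Schwartz test functions: locally constant with compact support. -/
def IsTest (p N : ℕ) [Fact p.Prime] (f : (Fin N → ℚ_[p]) → ℝ) : Prop :=
  HasCompactSupport f ∧
    ∀ x : Fin N → ℚ_[p], ∃ r : ℤ, ∀ y : Fin N → ℚ_[p], ‖y - x‖ ≤ (p : ℝ) ^ r → f y = f x

/-- The pairing `κ·x = Σ_j κ_j x_j` on `ℚ_p^N`. -/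
noncomputable def dotp (p N : ℕ) [Fact p.Prime] (κ x : Fin N → ℚ_[p]) : ℚ_[p] :=
  ∑ j, κ j * x j

/-- Fourier transform of a real-valued test function. -/
noncomputable def FTr (p N : ℕ) [Fact p.Prime] (μ : Measure (Fin N → ℚ_[p]))
    (χ : ℚ_[p] → ℂ) (φ : (Fin N → ℚ_[p]) → ℝ) (κ : Fin N → ℚ_[p]) : ℂ :=
  ∫ x, χ (dotp p N κ x) * (φ x : ℂ) ∂μ

/-- The symbol `A_{w_δ}(κ)`. -/
noncomputable def Asymb (p N : ℕ) [Fact p.Prime] (μ : Measure (Fin N → ℚ_[p]))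
    (χ : ℚ_[p] → ℂ) (w : (Fin N → ℚ_[p]) → ℝ) (κ : Fin N → ℚ_[p]) : ℂ :=
  ∫ y, (1 - χ (dotp p N y κ)) / ((w y : ℝ) : ℂ) ∂μ

/-- The covariance form `B(φ,θ)` (real-valued on real test functions). -/
noncomputable def Bform (p N : ℕ) [Fact p.Prime] (μ : Measure (Fin N → ℚ_[p]))
    (χ : ℚ_[p] → ℂ) (w : (Fin N → ℚ_[p]) → ℝ) (γ α₂ : ℝ)
    (φ θ : (Fin N → ℚ_[p]) → ℝ) : ℝ :=
  (∫ κ, FTr p N μ χ φ κ * (starRingEnd ℂ) (FTr p N μ χ θ κ) /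
    ((γ : ℂ) / 2 * Asymb p N μ χ w κ + (α₂ : ℂ) / 2) ∂μ).re

open Complex in
private lemma gauss_int (s : ℝ) (hs : 0 < s) (c : ℂ) :
    ∫ t : ℝ, Complex.exp (-((s:ℂ)/2) * (t:ℂ)^2 + c * (t:ℂ)) =
      ((Real.sqrt (2*Real.pi/s) : ℝ) : ℂ) * Complex.exp (c^2/(2*(s:ℂ))) := by
  have hs' : (s:ℂ) ≠ 0 := Complex.ofReal_ne_zero.mpr (ne_of_gt hs)
  have hb : (-((s:ℂ)/2)).re < 0 := by
    rw [show -((s:ℂ)/2) = ((-(s/2):ℝ):ℂ) by push_cast; ring, Complex.ofReal_re]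
    linarith
  have h := integral_cexp_quadratic hb c 0
  simp only [add_zero, zero_sub, neg_neg] at h
  rw [h]
  congr 1
  · rw [show ((Real.pi:ℂ) / ((s:ℂ)/2)) = (((2*Real.pi/s):ℝ):ℂ) by push_cast; field_simp]
    rw [show (1/2 : ℂ) = ((1/2:ℝ):ℂ) by norm_num]
    rw [← Complex.ofReal_cpow (by positivity), Real.sqrt_eq_rpow]
  · congr 1
    field_simp
    ring

/-- the Laplace transform (generating functional) of the canonical
Gaussian measure: `∫ e^{⟨W,J⟩} dP(W) = e^{B(J,J)/2}`, with the resulting bound for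
interacting partition functions. -/
theorem statement14
    (p : ℕ) [Fact p.Prime] (hp3 : 3 ≤ p) (N : ℕ) (hN : 1 ≤ N)
    (μ : Measure (Fin N → ℚ_[p])) [μ.IsAddHaarMeasure]
    (hμ1 : μ (Metric.closedBall 0 1) = 1)
    (δ : ℝ) (hδ : (N : ℝ) < δ)
    (w : (Fin N → ℚ_[p]) → ℝ)
    (hw0 : ∀ y, 0 ≤ w y)
    (hrad : ∀ x y : Fin N → ℚ_[p], ‖x‖ = ‖y‖ → w x = w y)
    (hcont : Continuous w)
    (hmono : ∀ x y : Fin N → ℚ_[p], ‖x‖ ≤ ‖y‖ → w x ≤ w y)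
    (hzero : ∀ y : Fin N → ℚ_[p], w y = 0 ↔ y = 0)
    (C₀ C₁ : ℝ) (hC₀ : 0 < C₀) (hC₁ : 0 < C₁)
    (hlow : ∀ y : Fin N → ℚ_[p], C₀ * ‖y‖ ^ δ ≤ w y)
    (hupp : ∀ y : Fin N → ℚ_[p], w y ≤ C₁ * ‖y‖ ^ δ)
    (χ : ℚ_[p] → ℂ)
    (hχ_add : ∀ a b, χ (a + b) = χ a * χ b)
    (hχ_ker : ∀ a : ℚ_[p], χ a = 1 ↔ ‖a‖ ≤ 1)
    (hχ_abs : ∀ a : ℚ_[p], ‖χ a‖ = 1)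
    (γ α₂ : ℝ) (hγ : 0 < γ) (hα₂ : 0 < α₂)
    (E : Type*) [MeasurableSpace E]
    (pair : E → ((Fin N → ℚ_[p]) → ℝ) → ℝ)
    (hlin : ∀ W : E, IsLinearMap ℝ (pair W))
    (hmeas : ∀ f : (Fin N → ℚ_[p]) → ℝ, IsTest p N f → (∫ x, f x ∂μ) = 0 →
      Measurable fun W => pair W f)
    (P : Measure E) [IsProbabilityMeasure P]
    (hchar : ∀ f : (Fin N → ℚ_[p]) → ℝ, IsTest p N f → (∫ x, f x ∂μ) = 0 →
      ∫ W, Complex.exp (Complex.I * ((pair W f : ℝ) : ℂ)) ∂P =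
        ((Real.exp (-(Bform p N μ χ w γ α₂ f f) / 2) : ℝ) : ℂ))
    -- the source `J ∈ L_ℝ(ℚ_p^N)`
    (J : (Fin N → ℚ_[p]) → ℝ) (hJ : IsTest p N J ∧ (∫ x, J x ∂μ) = 0) :
    Integrable (fun W => Real.exp (pair W J)) P ∧
    (∫ W, Real.exp (pair W J) ∂P = Real.exp (Bform p N μ χ w γ α₂ J J / 2)) ∧
    (∫ W, Real.exp (pair W J) ∂P =
      Real.exp ((1 / 2) *
        (∫ κ, FTr p N μ χ J κ * (starRingEnd ℂ) (FTr p N μ χ J κ) /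
          ((γ : ℂ) / 2 * Asymb p N μ χ w κ + (α₂ : ℂ) / 2) ∂μ).re)) ∧
    (∀ F : E → ℝ, Measurable F → (∀ W, 0 ≤ F W ∧ F W ≤ 1) →
      Integrable (fun W => F W * Real.exp (pair W J)) P ∧
      (∫ W, F W * Real.exp (pair W J) ∂P) ≤
        Real.exp (Bform p N μ χ w γ α₂ J J / 2)) := by
  obtain ⟨hJt, hJ0⟩ := hJ
  set B : ℝ := Bform p N μ χ w γ α₂ J J with hB
  set X : E → ℝ := fun W => pair W J with hX
  have hXm : Measurable X := hmeas J hJt hJ0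
  -- scaled test functions
  have htest : ∀ t : ℝ, IsTest p N (fun x => t * J x) := by
    intro t
    refine ⟨?_, ?_⟩
    · exact hJt.1.mul_left
    · intro x
      obtain ⟨r, hr⟩ := hJt.2 x
      exact ⟨r, fun y hy => by show t * J y = t * J x; rw [hr y hy]⟩
  have hint0 : ∀ t : ℝ, (∫ x, t * J x ∂μ) = 0 := by
    intro t
    rw [integral_const_mul, hJ0, mul_zero]
  -- Fourier transform scaling
  have hFTscale : ∀ t : ℝ, ∀ κ, FTr p N μ χ (fun x => t * J x) κ = (t:ℂ) * FTr p N μ χ J κ := by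
    intro t κ
    unfold FTr
    rw [← integral_const_mul]
    apply integral_congr_ae
    filter_upwards with x
    push_cast
    ring
  have hBscale : ∀ t : ℝ, Bform p N μ χ w γ α₂ (fun x => t * J x) (fun x => t * J x) = t^2 * B := by
    intro t
    rw [hB]
    unfold Bform
    rw [← Complex.re_ofReal_mul, ← integral_const_mul]
    congr 2
    funext κ
    rw [hFTscale t κ, map_mul, Complex.conj_ofReal]
    push_cast
    ring
  -- the characteristic function of X at every frequency t
  have hchar' : ∀ t : ℝ, ∫ W, Complex.exp (Complex.I * ((t * X W : ℝ) : ℂ)) ∂P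
      = ((Real.exp (-(t^2 * B)/2) : ℝ) : ℂ) := by
    intro t
    have h1 := hchar (fun x => t * J x) (htest t) (hint0 t)
    have h2 : ∀ W : E, pair W (fun x => t * J x) = t * X W := fun W => (hlin W).map_smul t J
    simp only [h2] at h1
    rw [h1, hBscale t]
  -- nonnegativity of B
  have hB0 : 0 ≤ B := by
    have h1 := hchar' 1
    have h2 : ‖∫ W, Complex.exp (Complex.I * ((1 * X W : ℝ) : ℂ)) ∂P‖ ≤ 1 := by
      refine le_trans (norm_integral_le_integral_norm _) ?_
      have : ∀ W : E, ‖Complex.exp (Complex.I * ((1 * X W : ℝ) : ℂ))‖ = 1 := by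
        intro W
        rw [Complex.norm_exp]
        simp [Complex.mul_re]
      rw [integral_congr_ae (ae_of_all _ this)]
      simp
    rw [h1] at h2
    rw [Complex.norm_real, Real.norm_eq_abs, abs_of_pos (Real.exp_pos _)] at h2
    have := Real.exp_le_one_iff.mp h2
    nlinarith
  -- integrability of the Gaussian-damped exponential
  have hIntBump : ∀ s : ℝ, 0 < s →
      Integrable (fun W => Real.exp (X W - X W ^ 2 / (2 * s))) P := by
    intro s hs
    refine Integrable.mono' (integrable_const (Real.exp (s/2)))
      ((Real.measurable_exp.comp ((hXm.sub ((hXm.pow_const 2).div_const _)))).aestronglyMeasurable) ?_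
    filter_upwards with W
    rw [Real.norm_eq_abs, abs_of_pos (Real.exp_pos _)]
    apply Real.exp_le_exp.mpr
    have h2s : (0:ℝ) < 2*s := by positivity
    have hq : (0:ℝ) ≤ (X W - s)^2/(2*s) := div_nonneg (sq_nonneg _) h2s.le
    have hexp : s/2 - (X W - X W ^ 2 / (2*s)) = (X W - s)^2/(2*s) := by
      field_simp
      ring
    linarith
  -- the key Gaussian-smoothing computation
  have key : ∀ s : ℝ, 0 < s → ∫ W, Real.exp (X W - X W ^ 2 / (2 * s)) ∂P
      = Real.sqrt (s / (s + B)) * Real.exp (s * B / (2 * (s + B))) := by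
    intro s hs
    have hsne : s ≠ 0 := ne_of_gt hs
    have hsc : (s:ℂ) ≠ 0 := Complex.ofReal_ne_zero.mpr hsne
    have hsB : (0:ℝ) < s + B := by linarith
    have hsBne : s + B ≠ 0 := ne_of_gt hsB
    have hsBc : ((s+B:ℝ):ℂ) ≠ 0 := Complex.ofReal_ne_zero.mpr hsBne
    have hsqrt : ((Real.sqrt (2*Real.pi/s) : ℝ) : ℂ) ≠ 0 :=
      Complex.ofReal_ne_zero.mpr (ne_of_gt (Real.sqrt_pos.mpr (by positivity)))
    -- measurability of the Fubini integrand
    have hmeasφ : Measurable (Function.uncurry fun (W:E) (t:ℝ) =>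
        Complex.exp (-((s:ℂ)/2) * ((t:ℝ):ℂ)^2 + (Complex.I * ((X W - s:ℝ):ℂ)) * ((t:ℝ):ℂ))) := by
      apply Complex.measurable_exp.comp
      apply Measurable.add
      · exact measurable_const.mul ((Complex.measurable_ofReal.comp measurable_snd).pow_const 2)
      · exact (measurable_const.mul (Complex.measurable_ofReal.comp
          ((hXm.comp measurable_fst).sub measurable_const))).mul
          (Complex.measurable_ofReal.comp measurable_snd)
    have hFub : Integrable (Function.uncurry fun (W:E) (t:ℝ) =>
        Complex.exp (-((s:ℂ)/2) * ((t:ℝ):ℂ)^2 + (Complex.I * ((X W - s:ℝ):ℂ)) * ((t:ℝ):ℂ)))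
        (P.prod volume) := by
      have hb : Integrable (fun q : E × ℝ => (1:ℝ) * Real.exp (-(s/2) * q.2^2)) (P.prod volume) :=
        (integrable_const (1:ℝ)).mul_prod (integrable_exp_neg_mul_sq (by positivity))
      simp only [one_mul] at hb
      refine hb.mono' hmeasφ.aestronglyMeasurable ?_
      filter_upwards with q
      obtain ⟨W, t⟩ := q
      apply le_of_eq
      simp only [Function.uncurry_apply_pair]
      rw [Complex.norm_exp]
      congr 1
      rw [show (-((s:ℂ)/2) * ((t:ℝ):ℂ)^2 + (Complex.I * ((X W - s:ℝ):ℂ)) * ((t:ℝ):ℂ))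
          = ((-(s/2) * t^2 : ℝ) : ℂ) + (((X W - s) * t : ℝ):ℂ) * Complex.I by push_cast; ring]
      rw [Complex.add_re, Complex.ofReal_re, Complex.mul_I_re, Complex.ofReal_im]
      ring
    -- the inner double integral
    have hinner : (∫ W, ∫ t:ℝ, Complex.exp (-((s:ℂ)/2) * ((t:ℝ):ℂ)^2
          + (Complex.I * ((X W - s:ℝ):ℂ)) * ((t:ℝ):ℂ)) ∂(volume) ∂P)
        = ((Real.sqrt (2*Real.pi/(s+B)) : ℝ) : ℂ)
            * Complex.exp (((-(s^2)/(2*(s+B)) : ℝ)):ℂ) := by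
      rw [integral_integral_swap hFub]
      calc (∫ t:ℝ, ∫ W, Complex.exp (-((s:ℂ)/2) * ((t:ℝ):ℂ)^2
              + (Complex.I * ((X W - s:ℝ):ℂ)) * ((t:ℝ):ℂ)) ∂P ∂(volume))
          = ∫ t:ℝ, Complex.exp (-((s:ℂ)/2) * ((t:ℝ):ℂ)^2 - Complex.I * (s:ℂ) * ((t:ℝ):ℂ))
              * ((Real.exp (-(t^2 * B)/2) : ℝ) : ℂ) ∂(volume) := by
            apply integral_congr_ae
            filter_upwards with t
            have hW : ∀ W : E, Complex.exp (-((s:ℂ)/2) * ((t:ℝ):ℂ)^2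
                + (Complex.I * ((X W - s:ℝ):ℂ)) * ((t:ℝ):ℂ))
                = Complex.exp (-((s:ℂ)/2) * ((t:ℝ):ℂ)^2 - Complex.I * (s:ℂ) * ((t:ℝ):ℂ))
                  * Complex.exp (Complex.I * ((t * X W : ℝ) : ℂ)) := by
              intro W
              rw [← Complex.exp_add]
              congr 1
              push_cast
              ring
            rw [integral_congr_ae (ae_of_all _ hW), integral_const_mul, hchar' t]
        _ = ∫ t:ℝ, Complex.exp (-(((s+B:ℝ):ℂ)/2) * ((t:ℝ):ℂ)^2
              + (-Complex.I * (s:ℂ)) * ((t:ℝ):ℂ)) ∂(volume) := by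
            apply integral_congr_ae
            filter_upwards with t
            rw [Complex.ofReal_exp, ← Complex.exp_add]
            congr 1
            push_cast
            ring
        _ = ((Real.sqrt (2*Real.pi/(s+B)) : ℝ) : ℂ)
              * Complex.exp (((-(s^2)/(2*(s+B)) : ℝ)):ℂ) := by
            rw [gauss_int (s+B) hsB (-Complex.I * (s:ℂ))]
            congr 1
            rw [show (-Complex.I * (s:ℂ))^2 = -((s:ℂ)^2) by
              rw [mul_pow, neg_sq, Complex.I_sq]; ring]
            push_cast
            ring
    -- assemble
    rw [← Complex.ofReal_inj]
    calc ((∫ W, Real.exp (X W - X W ^ 2 / (2 * s)) ∂P : ℝ) : ℂ)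
        = ∫ W, ((Real.exp (X W - X W ^ 2 / (2 * s)) : ℝ) : ℂ) ∂P := integral_ofReal.symm
      _ = ∫ W, Complex.exp (((s/2 : ℝ)):ℂ)
            * Complex.exp (-(((X W - s:ℝ):ℂ))^2 / (2*(s:ℂ))) ∂P := by
          apply integral_congr_ae
          filter_upwards with W
          rw [Complex.ofReal_exp, ← Complex.exp_add]
          congr 1
          push_cast
          field_simp
          ring
      _ = Complex.exp (((s/2 : ℝ)):ℂ)
            * ∫ W, Complex.exp (-(((X W - s:ℝ):ℂ))^2 / (2*(s:ℂ))) ∂P := by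
          rw [integral_const_mul]
      _ = Complex.exp (((s/2 : ℝ)):ℂ) * ∫ W, ((Real.sqrt (2*Real.pi/s) : ℝ) : ℂ)⁻¹
            * ∫ t:ℝ, Complex.exp (-((s:ℂ)/2) * ((t:ℝ):ℂ)^2
                + (Complex.I * ((X W - s:ℝ):ℂ)) * ((t:ℝ):ℂ)) ∂(volume) ∂P := by
          congr 1
          apply integral_congr_ae
          filter_upwards with W
          rw [gauss_int s hs (Complex.I * ((X W - s:ℝ):ℂ)), ← mul_assoc,
            inv_mul_cancel₀ hsqrt, one_mul]
          congr 1
          rw [mul_pow, Complex.I_sq]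
          ring
      _ = Complex.exp (((s/2 : ℝ)):ℂ) * (((Real.sqrt (2*Real.pi/s) : ℝ) : ℂ)⁻¹
            * (((Real.sqrt (2*Real.pi/(s+B)) : ℝ) : ℂ)
              * Complex.exp (((-(s^2)/(2*(s+B)) : ℝ)):ℂ))) := by
          rw [integral_const_mul, hinner]
      _ = ((Real.sqrt (s / (s + B)) * Real.exp (s * B / (2 * (s + B))) : ℝ) : ℂ) := by
          rw [← Complex.ofReal_exp, ← Complex.ofReal_exp, ← Complex.ofReal_inv,
            ← Complex.ofReal_mul, ← Complex.ofReal_mul, ← Complex.ofReal_mul]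
          rw [Complex.ofReal_inj]
          have h1 : (Real.sqrt (2*Real.pi/s))⁻¹ * Real.sqrt (2*Real.pi/(s+B))
              = Real.sqrt (s / (s + B)) := by
            rw [← Real.sqrt_inv, ← Real.sqrt_mul (by positivity)]
            congr 1
            have hpi := Real.pi_pos
            field_simp
          have h2 : Real.exp (s/2) * Real.exp (-(s^2)/(2*(s+B)))
              = Real.exp (s * B / (2 * (s + B))) := by
            rw [← Real.exp_add]
            congr 1
            field_simp
            ring
          calc Real.exp (s/2) * ((Real.sqrt (2*Real.pi/s))⁻¹
                * (Real.sqrt (2*Real.pi/(s+B)) * Real.exp (-(s^2)/(2*(s+B)))))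
              = ((Real.sqrt (2*Real.pi/s))⁻¹ * Real.sqrt (2*Real.pi/(s+B)))
                * (Real.exp (s/2) * Real.exp (-(s^2)/(2*(s+B)))) := by ring
            _ = Real.sqrt (s / (s + B)) * Real.exp (s * B / (2 * (s + B))) := by
                rw [h1, h2]
  -- monotone convergence: the lintegral of e^X
  have hseq : ∀ n : ℕ, (0:ℝ) < (n:ℝ) + 1 := fun n => by positivity
  have hmono2 : ∀ ⦃n m : ℕ⦄, n ≤ m → ∀ W : E,
      Real.exp (X W - X W ^ 2 / (2 * ((n:ℝ)+1))) ≤ Real.exp (X W - X W ^ 2 / (2 * ((m:ℝ)+1))) := by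
    intro n m hnm W
    apply Real.exp_le_exp.mpr
    have hc : ((n:ℝ)+1) ≤ ((m:ℝ)+1) := by
      have : (n:ℝ) ≤ (m:ℝ) := Nat.cast_le.mpr hnm
      linarith
    have := div_le_div_of_nonneg_left (sq_nonneg (X W))
      (by positivity : (0:ℝ) < 2 * ((n:ℝ)+1)) (by linarith : 2 * ((n:ℝ)+1) ≤ 2 * ((m:ℝ)+1))
    linarith
  have hflim : ∀ W : E, Tendsto (fun n : ℕ => X W - X W ^ 2 / (2 * ((n:ℝ)+1)))
      atTop (nhds (X W)) := by
    intro W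
    have h1 : Tendsto (fun n : ℕ => (2 * ((n:ℝ)+1))) atTop atTop := by
      apply Tendsto.const_mul_atTop (by norm_num : (0:ℝ) < 2)
      exact tendsto_atTop_add_const_right _ 1 tendsto_natCast_atTop_atTop
    have h2 : Tendsto (fun n : ℕ => X W ^ 2 / (2 * ((n:ℝ)+1))) atTop (nhds 0) :=
      Tendsto.div_atTop tendsto_const_nhds h1
    have h3 : Tendsto (fun _ : ℕ => X W) atTop (nhds (X W)) := tendsto_const_nhds
    simpa using h3.sub h2
  have hEc : ∫⁻ W, ENNReal.ofReal (Real.exp (X W)) ∂P = ENNReal.ofReal (Real.exp (B/2)) := by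
    set f : ℕ → E → ENNReal := fun n W =>
      ENNReal.ofReal (Real.exp (X W - X W ^ 2 / (2 * ((n:ℝ)+1)))) with hf
    have hfm : ∀ n, Measurable (f n) := by
      intro n
      exact ENNReal.measurable_ofReal.comp (Real.measurable_exp.comp
        (hXm.sub ((hXm.pow_const 2).div_const _)))
    have hfmono : Monotone f := fun n m hnm W => ENNReal.ofReal_le_ofReal (hmono2 hnm W)
    have hsup : ∀ W : E, (⨆ n, f n W) = ENNReal.ofReal (Real.exp (X W)) := by
      intro W
      refine tendsto_nhds_unique (tendsto_atTop_iSup (fun n m h => hfmono h W)) ?_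
      exact (ENNReal.continuous_ofReal.tendsto _).comp
        ((Real.continuous_exp.tendsto _).comp (hflim W))
    have hlin2 : ∀ n : ℕ, ∫⁻ W, f n W ∂P
        = ENNReal.ofReal (Real.sqrt (((n:ℝ)+1) / (((n:ℝ)+1) + B))
            * Real.exp (((n:ℝ)+1) * B / (2 * (((n:ℝ)+1) + B)))) := by
      intro n
      rw [← ofReal_integral_eq_lintegral_ofReal (hIntBump _ (hseq n))
        (ae_of_all _ fun W => (Real.exp_pos _).le)]
      rw [key _ (hseq n)]
    have hmonoI : Monotone (fun n => ∫⁻ W, f n W ∂P) :=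
      fun n m h => lintegral_mono (fun W => hfmono h W)
    have hlimI : Tendsto (fun n => ∫⁻ W, f n W ∂P) atTop
        (nhds (ENNReal.ofReal (Real.exp (B/2)))) := by
      simp only [hlin2]
      apply (ENNReal.continuous_ofReal.tendsto _).comp
      have h1 : Tendsto (fun n : ℕ => ((n:ℝ)+1)) atTop atTop :=
        tendsto_atTop_add_const_right _ 1 tendsto_natCast_atTop_atTop
      have h2 : Tendsto (fun n : ℕ => ((n:ℝ)+1) + B) atTop atTop :=
        tendsto_atTop_add_const_right _ B h1
      have h3 : Tendsto (fun n : ℕ => B / (((n:ℝ)+1) + B)) atTop (nhds 0) :=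
        Tendsto.div_atTop tendsto_const_nhds h2
      have hne : ∀ n : ℕ, ((n:ℝ)+1) + B ≠ 0 := by
        intro n
        have := hseq n
        have := hB0
        intro hcontra
        linarith
      have h4 : Tendsto (fun n : ℕ => ((n:ℝ)+1) / (((n:ℝ)+1) + B)) atTop (nhds 1) := by
        have heq : ∀ n : ℕ, ((n:ℝ)+1) / (((n:ℝ)+1) + B) = 1 - B / (((n:ℝ)+1) + B) := by
          intro n
          field_simp [hne n]
          ring
        rw [funext heq]
        have h1c : Tendsto (fun _ : ℕ => (1:ℝ)) atTop (nhds 1) := tendsto_const_nhds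
        simpa using h1c.sub h3
      have h5 : Tendsto (fun n : ℕ => Real.sqrt (((n:ℝ)+1) / (((n:ℝ)+1) + B)))
          atTop (nhds 1) := by
        have := (Real.continuous_sqrt.tendsto 1).comp h4
        rw [Real.sqrt_one] at this
        exact this
      have h6 : Tendsto (fun n : ℕ => ((n:ℝ)+1) * B / (2 * (((n:ℝ)+1) + B)))
          atTop (nhds (B/2)) := by
        have heq : ∀ n : ℕ, ((n:ℝ)+1) * B / (2 * (((n:ℝ)+1) + B))
            = (B/2) * (((n:ℝ)+1) / (((n:ℝ)+1) + B)) := by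
          intro n
          field_simp
        rw [funext heq]
        have := h4.const_mul (B/2)
        simpa using this
      have h7 : Tendsto (fun n : ℕ => Real.exp (((n:ℝ)+1) * B / (2 * (((n:ℝ)+1) + B))))
          atTop (nhds (Real.exp (B/2))) := (Real.continuous_exp.tendsto _).comp h6
      have := h5.mul h7
      simpa using this
    calc ∫⁻ W, ENNReal.ofReal (Real.exp (X W)) ∂P
        = ∫⁻ W, ⨆ n, f n W ∂P := by
          apply lintegral_congr
          intro W
          rw [hsup W]
      _ = ⨆ n, ∫⁻ W, f n W ∂P := lintegral_iSup hfm hfmono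
      _ = ENNReal.ofReal (Real.exp (B/2)) :=
          tendsto_nhds_unique (tendsto_atTop_iSup hmonoI) hlimI
  -- integrability of e^X
  have hIntExp : Integrable (fun W => Real.exp (X W)) P := by
    constructor
    · exact (Real.measurable_exp.comp hXm).aestronglyMeasurable
    · rw [hasFiniteIntegral_iff_ofReal (ae_of_all _ fun W => (Real.exp_pos _).le), hEc]
      exact ENNReal.ofReal_lt_top
  have hIntVal : ∫ W, Real.exp (X W) ∂P = Real.exp (B/2) := by
    rw [integral_eq_lintegral_of_nonneg_ae (ae_of_all _ fun W => (Real.exp_pos _).le)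
      (Real.measurable_exp.comp hXm).aestronglyMeasurable, hEc,
      ENNReal.toReal_ofReal (Real.exp_pos _).le]
  refine ⟨hIntExp, hIntVal, ?_, ?_⟩
  · rw [hIntVal]
    congr 1
    rw [hB]
    unfold Bform
    ring
  · intro F hF hF01
    have hIntF : Integrable (fun W => F W * Real.exp (X W)) P := by
      refine hIntExp.mono' ((hF.mul (Real.measurable_exp.comp hXm)).aestronglyMeasurable) ?_
      filter_upwards with W
      rw [Real.norm_eq_abs, abs_mul, abs_of_pos (Real.exp_pos _)]
      have h1 : |F W| ≤ 1 := abs_le.mpr ⟨by linarith [(hF01 W).1], (hF01 W).2⟩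
      nlinarith [Real.exp_pos (X W), abs_nonneg (F W)]
    refine ⟨hIntF, ?_⟩
    rw [← hIntVal]
    apply integral_mono hIntF hIntExp
    intro W
    show F W * Real.exp (X W) ≤ Real.exp (X W)
    have := mul_le_mul_of_nonneg_right (hF01 W).2 (Real.exp_pos (X W)).le
    simpa using this
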